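/- Let G be a finite connected simple graph with at least four vertices and let v be a vertex of G of degree 2 whose two (distinct) neighbours u and w are not adjacent in G. Then the graph G' obtained from G by deleting v and adding the edge {u, w} is a connected simple graph with the same genus as G. -/

import Mathlib

namespace Genus

open SimpleGraph

variable {V : Type*} (G : SimpleGraph V)

/-- The dart-reversal involution, as a permutation of the darts. -/
def dartRev : Equiv.Perm G.Dart where
  toFun d := d.symm
  invFun d := d.symm
  left_inv d := d.symm_symm
  right_inv d := d.symm_symm

/-- A rotation system on `G`: a permutation of the darts sending each dart to a dart
with the same initial vertex, whose restriction to the darts leaving any fixed vertex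
is a single cycle (equivalently, acts transitively on them). -/
def IsRotationSystem (σ : Equiv.Perm G.Dart) : Prop :=
  (∀ d : G.Dart, (σ d).fst = d.fst) ∧
    ∀ d d' : G.Dart, d.fst = d'.fst → ∃ n : ℕ, (σ ^ n) d = d'

/-- The face permutation `φ(d) = σ(d̄)` of the embedding `(G, σ)`. -/
def facePerm (σ : Equiv.Perm G.Dart) : Equiv.Perm G.Dart := σ * dartRev G

/-- Two darts are equivalent iff they lie in the same face (same orbit of `φ`). -/
def faceSetoid (σ : Equiv.Perm G.Dart) : Setoid G.Dart :=
  ⟨(facePerm G σ).SameCycle,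
    ⟨fun x => Equiv.Perm.SameCycle.refl _ x, fun h => h.symm, fun h h' => h.trans h'⟩⟩

/-- The number of faces of the embedding `(G, σ)`: the number of orbits of the
face permutation on the darts. -/
noncomputable def numFaces (σ : Equiv.Perm G.Dart) : ℕ :=
  Nat.card (Quotient (faceSetoid G σ))

/-- `faceSize G σ e` is `f(e)`, the number of darts in the face containing `e`. -/
noncomputable def faceSize (σ : Equiv.Perm G.Dart) (e : G.Dart) : ℕ :=
  Nat.card {d : G.Dart // (facePerm G σ).SameCycle e d}

/-- The genus `1 + (|E| - |V| - |F|)/2` of the embedding `(G, σ)`. -/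
noncomputable def embGenus [Fintype V] (σ : Equiv.Perm G.Dart) : ℚ :=
  1 + ((Nat.card G.edgeSet : ℚ) - (Nat.card V : ℚ) - (numFaces G σ : ℚ)) / 2

/-- The set of genera of all embeddings of `G`; the genus of `G` is its minimum. -/
def genusSet [Fintype V] : Set ℚ :=
  {g : ℚ | ∃ σ : Equiv.Perm G.Dart, IsRotationSystem G σ ∧ embGenus G σ = g}

/-- A facial-like walk: a cyclic sequence of `k` pairwise distinct darts such that each dart
starts at the end vertex of the previous one, and a dart is followed by its reverse
iff its end vertex has degree 1. -/
def IsFacialLikeWalk [Fintype V] [DecidableRel G.Adj] {k : ℕ} (w : Fin k → G.Dart) : Prop :=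
  ∃ hk : 0 < k, Function.Injective w ∧
    ∀ i : Fin k,
      (w ⟨(i + 1) % k, Nat.mod_lt _ hk⟩).fst = (w i).snd ∧
        (w ⟨(i + 1) % k, Nat.mod_lt _ hk⟩ = (w i).symm ↔ G.degree (w i).snd = 1)

/-- `fw G e` is `f_w(e)`, the length of a shortest facial-like walk containing the dart `e`. -/
noncomputable def fw [Fintype V] [DecidableRel G.Adj] (e : G.Dart) : ℕ :=
  sInf {k : ℕ | ∃ w : Fin k → G.Dart, IsFacialLikeWalk G w ∧ ∃ i, w i = e}

end Genus

/-!
Deleting `v` and joining `u` to `w` replaces the two edges `uv`, `vw` by the single edge `uw`,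
so `|E| - |V|` does not change and only the faces have to be compared. Identify the darts of
`G'` with the darts of `G` not leaving `v`, the new darts `(u, w)` and `(w, u)` becoming
`(u, v)` and `(w, v)`. A rotation system at the degree-two vertex `v` must swap its two darts,
so rotation systems of `G` and `G'` correspond by restriction and extension. Under this
correspondence the face permutation of `G'` is the one of `G` with the darts leaving `v`
skipped (a face of `G` runs through `(u, v), (v, w)` exactly where the face of `G'` runs through
`(u, w)`), and skipping points of which no two are consecutive preserves the number of orbits.
-/

open Function Set SimpleGraph

namespace Equiv.Perm

variable {α β : Type*}

theorem pow_apply_eq_of_semiconj {e : β → α} {σ : Perm α} {τ : Perm β}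
    (h : ∀ b, σ (e b) = e (τ b)) (n : ℕ) (b : β) : (σ ^ n) (e b) = e ((τ ^ n) b) := by
  simpa only [coe_pow] using ((Semiconj.iterate_right (f := e) (fun b => (h b).symm) n) b).symm

theorem exists_apply_embedding_eq (ι : β ↪ α) (σ : Perm α)
    (hσ : ∀ x, σ x ∈ range ι ↔ x ∈ range ι) : ∃ τ : Perm β, ∀ b, σ (ι b) = ι (τ b) :=
  ⟨(Equiv.ofInjective ι ι.injective).symm.permCongr (σ.subtypePerm hσ), fun b =>
    (apply_ofInjective_symm ι.injective (σ.subtypePerm hσ (ofInjective ι ι.injective b))).symm⟩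

theorem exists_extend_swap [DecidableEq α] (ι : β ↪ α) (τ : Perm β) {a b : α}
    (ha : a ∉ range ι) (hb : b ∉ range ι) :
    ∃ σ : Perm α, (∀ x, σ (ι x) = ι (τ x)) ∧ σ a = b ∧ σ b = a := by
  refine ⟨τ.viaEmbedding ι * swap a b, fun x => ?_, ?_, ?_⟩
  · rw [mul_apply, swap_apply_of_ne_of_ne (fun h => ha ⟨x, h⟩) (fun h => hb ⟨x, h⟩),
      viaEmbedding_apply]
  · rw [mul_apply, swap_apply_left, viaEmbedding_apply_of_notMem _ _ _ hb]
  · rw [mul_apply, swap_apply_right, viaEmbedding_apply_of_notMem _ _ _ ha]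

variable (α) in
theorem exists_forall_exists_pow_apply_eq [Finite α] :
    ∃ p : Perm α, ∀ a b : α, ∃ k : ℕ, (p ^ k) a = b := by
  obtain ⟨n, ⟨e⟩⟩ := Finite.exists_equiv_fin α
  rcases Nat.lt_or_ge n 2 with hn | hn
  · have : Subsingleton α := e.subsingleton_congr.2 (Fin.subsingleton_iff_le_one.2 (by omega))
    exact ⟨1, fun a b => ⟨0, Subsingleton.elim _ _⟩⟩
  · refine ⟨e.symm.permCongr (finRotate n), fun a b => ?_⟩
    have hsupp (i : Fin n) : finRotate n i ≠ i :=
      mem_support.1 (by rw [support_finRotate_of_le hn]; exact Finset.mem_univ _)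
    obtain ⟨k, hk⟩ :=
      ((isCycle_finRotate_of_le hn).sameCycle (hsupp (e a)) (hsupp (e b))).exists_nat_pow_eq
    refine ⟨k, ?_⟩
    have := pow_apply_eq_of_semiconj (e := e.symm) (σ := e.symm.permCongr (finRotate n))
      (τ := finRotate n) (fun _ => by simp [permCongr_apply]) k (e a)
    simpa [hk] using this

section Skip

variable {f : Perm α} {g : Perm β} {e : β → α}
  (hin : ∀ b, f (e b) ∈ range e → e (g b) = f (e b))
  (hout : ∀ b, f (e b) ∉ range e → e (g b) = f (f (e b)))
include hin hout

theorem sameCycle_apply_of_skip (b : β) : f.SameCycle (e b) (e (g b)) := by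
  by_cases h : f (e b) ∈ range e
  · exact hin b h ▸ (SameCycle.refl f _).apply_right
  · exact hout b h ▸ (SameCycle.refl f _).apply_right.apply_right

variable (he : Injective e) (hskip : ∀ x ∉ range e, f x ∈ range e)
include he hskip

theorem sameCycle_of_pow_apply_eq_of_skip (n : ℕ) {b c : β}
    (hn : (f ^ n) (e b) = e c) : g.SameCycle b c := by
  induction n using Nat.strong_induction_on generalizing c with
  | _ n ih =>
  rcases n with _ | n
  · exact he hn ▸ SameCycle.refl g b
  have hn' : f ((f ^ n) (e b)) = e c := by rwa [pow_succ', mul_apply] at hn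
  by_cases hx : (f ^ n) (e b) ∈ range e
  · obtain ⟨c₀, hc₀⟩ := hx
    rw [← hc₀] at hn'
    have hstep : g c₀ = c := he ((hin c₀ ⟨c, hn'.symm⟩).trans hn')
    exact hstep ▸ (ih n n.lt_succ_self hc₀.symm).apply_right
  rcases n with _ | m
  · exact absurd ⟨b, rfl⟩ hx
  have hy : (f ^ m) (e b) ∈ range e := by
    by_contra hy
    exact hx (by rw [pow_succ', mul_apply]; exact hskip _ hy)
  obtain ⟨c₀, hc₀⟩ := hy
  rw [pow_succ', mul_apply, ← hc₀] at hx hn'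
  have hstep : g c₀ = c := he ((hout c₀ hx).trans hn')
  exact hstep ▸ (ih m (by omega) hc₀.symm).apply_right

theorem sameCycle_iff_of_skip [Finite α] {b c : β} :
    f.SameCycle (e b) (e c) ↔ g.SameCycle b c := by
  have : Finite β := Finite.of_injective e he
  refine ⟨fun h => ?_, fun h => ?_⟩
  · obtain ⟨n, hn⟩ := h.exists_nat_pow_eq
    exact sameCycle_of_pow_apply_eq_of_skip hin hout he hskip n hn
  · obtain ⟨n, rfl⟩ := h.exists_nat_pow_eq
    clear h
    induction n with
    | zero => exact SameCycle.refl f _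
    | succ n ih =>
      rw [pow_succ', mul_apply]
      exact ih.trans (sameCycle_apply_of_skip hin hout _)

theorem card_quotient_sameCycle_eq_of_skip [Finite α] :
    Nat.card (Quotient (SameCycle.setoid g)) = Nat.card (Quotient (SameCycle.setoid f)) := by
  refine Nat.card_eq_of_bijective
    (Quotient.map e fun _ _ => (sameCycle_iff_of_skip hin hout he hskip).2) ⟨?_, ?_⟩
  · rintro ⟨b⟩ ⟨c⟩ h
    exact Quotient.sound ((sameCycle_iff_of_skip hin hout he hskip).1 (Quotient.exact h))
  · rintro ⟨x⟩
    by_cases hx : x ∈ range e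
    · obtain ⟨b, rfl⟩ := hx
      exact ⟨⟦b⟧, rfl⟩
    · obtain ⟨b, hb⟩ := hskip x hx
      exact ⟨⟦b⟧, Quotient.sound (hb ▸ (SameCycle.refl f x).apply_right.symm)⟩

end Skip

end Equiv.Perm

theorem SimpleGraph.eq_or_eq_of_degree_eq_two {V : Type*} {G : SimpleGraph V} {v u w : V}
    [Fintype (G.neighborSet v)] (hdeg : G.degree v = 2) (hu : G.Adj v u) (hw : G.Adj v w)
    (huw : u ≠ w) {x : V} (hx : G.Adj v x) : x = u ∨ x = w := by
  classical
  have hsub : {u, w} ⊆ G.neighborFinset v := by simp [Finset.insert_subset_iff, hu, hw]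
  have heq := Finset.eq_of_subset_of_card_le hsub
    (by rw [card_neighborFinset_eq_degree, hdeg, Finset.card_pair huw])
  simpa [← heq] using (G.mem_neighborFinset v x).2 hx

instance SimpleGraph.Dart.finite {V : Type*} [Finite V] (G : SimpleGraph V) : Finite G.Dart :=
  Finite.of_injective _ Dart.toProd_injective

namespace Genus

variable {V W : Type*}

theorem exists_isRotationSystem [Finite V] (G : SimpleGraph V) :
    ∃ σ : Equiv.Perm G.Dart, IsRotationSystem G σ := by
  choose p hp using fun x : V =>
    Equiv.Perm.exists_forall_exists_pow_apply_eq {d : G.Dart // d.fst = x}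
  let σ := (Equiv.sigmaFiberEquiv (fun d : G.Dart => d.fst)).permCongr (Equiv.sigmaCongrRight p)
  have hσ (x : V) (t : {d : G.Dart // d.fst = x}) : σ t = p x t := by
    obtain ⟨d, rfl⟩ := t
    rfl
  refine ⟨σ, fun d => by rw [hσ d.fst ⟨d, rfl⟩]; exact (p d.fst ⟨d, rfl⟩).2, fun d d' h => ?_⟩
  obtain ⟨k, hk⟩ := hp d.fst ⟨d, rfl⟩ ⟨d', h.symm⟩
  exact ⟨k, by
    rw [Equiv.Perm.pow_apply_eq_of_semiconj (e := Subtype.val) (hσ d.fst) k ⟨d, rfl⟩, hk]⟩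

theorem exists_isLeast_genusSet [Fintype V] (G : SimpleGraph V) :
    ∃ g, IsLeast (genusSet G) g := by
  obtain ⟨σ, hσ⟩ := exists_isRotationSystem G
  have hfin : (genusSet G).Finite :=
    (finite_range (embGenus G)).subset fun _ ⟨σ, _, hσ⟩ => ⟨σ, hσ⟩
  obtain ⟨g, hg, hmin⟩ := exists_min_image _ id hfin ⟨_, σ, hσ, rfl⟩
  exact ⟨g, hg, hmin⟩

theorem natCard_dart [Finite V] (G : SimpleGraph V) :
    Nat.card G.Dart = 2 * Nat.card G.edgeSet := by
  classical
  have := Fintype.ofFinite V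
  rw [Nat.card_eq_fintype_card, Nat.card_eq_fintype_card, dart_card_eq_twice_card_edges,
    edgeFinset_card]

section RotationSystem

variable {G : SimpleGraph V} {σ : Equiv.Perm G.Dart}

theorem IsRotationSystem.facePerm_fst (hσ : IsRotationSystem G σ) (d : G.Dart) :
    (facePerm G σ d).fst = d.snd :=
  hσ.1 d.symm

theorem IsRotationSystem.of_semiconj {H : SimpleGraph W} {τ : Equiv.Perm H.Dart}
    {e : H.Dart → G.Dart} {ι : W → V} (he : Injective e) (hι : Injective ι)
    (hfst : ∀ d, (e d).fst = ι d.fst) (hσ : IsRotationSystem G σ)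
    (hτ : ∀ d, σ (e d) = e (τ d)) : IsRotationSystem H τ := by
  refine ⟨fun d => hι ?_, fun d d' h => ?_⟩
  · rw [← hfst, ← hfst, ← hτ, hσ.1]
  · obtain ⟨n, hn⟩ := hσ.2 (e d) (e d') (by rw [hfst, hfst, h])
    exact ⟨n, he (by rw [← Equiv.Perm.pow_apply_eq_of_semiconj hτ, hn])⟩

theorem dart_eq_or_eq_of_fst_eq {v a b : V} (ha : G.Adj v a) (hb : G.Adj v b)
    (hnbr : ∀ x, G.Adj v x → x = a ∨ x = b) {d : G.Dart} (hd : d.fst = v) :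
    d = ⟨(v, a), ha⟩ ∨ d = ⟨(v, b), hb⟩ := by
  obtain ⟨⟨x, y⟩, hxy⟩ := d
  subst hd
  rcases hnbr y hxy with rfl | rfl
  · exact Or.inl rfl
  · exact Or.inr rfl

theorem IsRotationSystem.apply_eq_of_neighbors (hσ : IsRotationSystem G σ) {v a b : V}
    (ha : G.Adj v a) (hb : G.Adj v b) (hab : a ≠ b) (hnbr : ∀ x, G.Adj v x → x = a ∨ x = b) :
    σ ⟨(v, a), ha⟩ = ⟨(v, b), hb⟩ := by
  refine (dart_eq_or_eq_of_fst_eq ha hb hnbr (hσ.1 _)).resolve_left fun hfix => hab ?_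
  obtain ⟨n, hn⟩ := hσ.2 ⟨(v, a), ha⟩ ⟨(v, b), hb⟩ rfl
  rw [Equiv.Perm.pow_apply_eq_self_of_apply_eq_self hfix] at hn
  exact congrArg (·.snd) hn

end RotationSystem

def suppress (G : SimpleGraph V) (v : V) (u w : {x // x ≠ v}) : SimpleGraph {x // x ≠ v} :=
  G.comap Subtype.val ⊔ fromEdgeSet {s(u, w)}

section Suppress

variable {G : SimpleGraph V} {v : V} {u w : {x // x ≠ v}}

theorem suppress_adj {a b : {x // x ≠ v}} :
    (suppress G v u w).Adj a b ↔ G.Adj a b ∨ s(a, b) = s(u, w) ∧ a ≠ b := by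
  simp [suppress]

theorem mk_eq_of_suppress_adj {a b : {x // x ≠ v}} (h : (suppress G v u w).Adj a b)
    (hab : ¬ G.Adj a b) : s(a, b) = s(u, w) :=
  ((suppress_adj.1 h).resolve_left hab).1

theorem connected_suppress (huw : u ≠ w) (hnbr : ∀ x, G.Adj v x → x = u ∨ x = w)
    (hG : G.Connected) : (suppress G v u w).Connected := by
  classical
  let f (x : V) : {x // x ≠ v} := if h : x = v then u else ⟨x, h⟩
  have hf (x : {x // x ≠ v}) : f x = x := dif_neg x.2
  have hfv (x : V) (hx : G.Adj v x) : (suppress G v u w).Reachable u (f x) := by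
    rcases hnbr x hx with hxu | hxw
    · rw [hxu, hf]
    · rw [hxw, hf]
      exact (suppress_adj.2 (Or.inr ⟨rfl, huw⟩)).reachable
  have hstep (a b : V) (hab : G.Adj a b) : (suppress G v u w).Reachable (f a) (f b) := by
    by_cases ha : a = v
    · subst a
      simpa [f] using hfv b hab
    by_cases hb : b = v
    · subst b
      simpa [f] using (hfv a hab.symm).symm
    · simpa [f, ha, hb] using (suppress_adj.2 (Or.inl hab)).reachable
  refine (connected_iff _).2 ⟨fun x y => ?_, ⟨u⟩⟩
  rw [← hf x, ← hf y, reachable_iff_reflTransGen]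
  exact ((reachable_iff_reflTransGen _ _).1 (hG.preconnected x y)).lift' f fun a b hab =>
    (reachable_iff_reflTransGen _ _).1 (hstep a b hab)

variable (hu : G.Adj v u) (hw : G.Adj v w)
include hu hw

theorem adj_of_mk_eq {a b : {x // x ≠ v}} (h : s(a, b) = s(u, w)) : G.Adj v a := by
  rcases Sym2.eq_iff.1 h with ⟨rfl, -⟩ | ⟨rfl, -⟩
  exacts [hu, hw]

variable [DecidableRel G.Adj]

/-- The new darts `(u, w)` and `(w, u)` are sent to the darts `(u, v)` and `(w, v)` of `G`. -/
def suppressDart : (suppress G v u w).Dart ↪ G.Dart where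
  toFun d := ⟨(d.fst, if G.Adj d.fst d.snd then d.snd else v), by
    split_ifs with h
    exacts [h, (adj_of_mk_eq hu hw (mk_eq_of_suppress_adj d.adj h)).symm]⟩
  inj' := by
    rintro ⟨⟨a, b⟩, hab⟩ ⟨⟨a', b'⟩, hab'⟩ h
    obtain ⟨ha, hb⟩ := Prod.ext_iff.1 (congrArg Dart.toProd h)
    obtain rfl : a = a' := Subtype.ext ha
    refine Dart.ext _ _ (Prod.ext rfl ?_)
    dsimp only at hb ⊢
    split_ifs at hb with h₁ h₂ h₂
    · exact Subtype.ext hb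
    · exact absurd hb b.2
    · exact absurd hb.symm b'.2
    · exact Sym2.congr_right.1
        ((mk_eq_of_suppress_adj hab h₁).trans (mk_eq_of_suppress_adj hab' h₂).symm)

theorem suppressDart_snd_ne_iff (d : (suppress G v u w).Dart) :
    (suppressDart hu hw d).snd ≠ v ↔ G.Adj d.fst d.snd := by
  change (if G.Adj d.fst d.snd then (d.snd : V) else v) ≠ v ↔ _
  split_ifs with h <;> simp [h, d.snd.2]

theorem suppressDart_symm_of_adj {d : (suppress G v u w).Dart} (h : G.Adj d.fst d.snd) :
    suppressDart hu hw d.symm = (suppressDart hu hw d).symm := by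
  refine Dart.ext _ _ (Prod.ext ?_ ?_)
  · change (d.snd : V) = if G.Adj d.fst d.snd then (d.snd : V) else v
    rw [if_pos h]
  · change (if G.Adj d.snd d.fst then (d.fst : V) else v) = d.fst
    rw [if_pos h.symm]

theorem suppressDart_eq_of_not_adj {d : (suppress G v u w).Dart} (h : ¬ G.Adj d.fst d.snd) :
    suppressDart hu hw d = ⟨(d.fst, v),
      (adj_of_mk_eq hu hw (mk_eq_of_suppress_adj d.adj h)).symm⟩ :=
  Dart.ext _ _ (Prod.ext rfl (if_neg h))

section Faces

variable {hu hw} {σ : Equiv.Perm G.Dart} {τ : Equiv.Perm (suppress G v u w).Dart}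
  (hστ : ∀ d, σ (suppressDart hu hw d) = suppressDart hu hw (τ d))
include hστ

theorem suppressDart_facePerm_of_adj {d : (suppress G v u w).Dart} (h : G.Adj d.fst d.snd) :
    suppressDart hu hw (facePerm _ τ d) = facePerm G σ (suppressDart hu hw d) := by
  change suppressDart hu hw (τ d.symm) = σ (suppressDart hu hw d).symm
  rw [← hστ, suppressDart_symm_of_adj hu hw h]

theorem suppressDart_facePerm_of_not_adj (hσ : IsRotationSystem G σ)
    (hnbr : ∀ x, G.Adj v x → x = u ∨ x = w) {d : (suppress G v u w).Dart}
    (h : ¬ G.Adj d.fst d.snd) :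
    suppressDart hu hw (facePerm _ τ d) =
      facePerm G σ (facePerm G σ (suppressDart hu hw d)) := by
  have hmk := mk_eq_of_suppress_adj d.adj h
  have hnbr' (x : V) (hx : G.Adj v x) : x = d.fst ∨ x = d.snd := by
    have := hnbr x hx
    rcases Sym2.eq_iff.1 hmk with ⟨h₁, h₂⟩ | ⟨h₁, h₂⟩ <;> rw [h₁, h₂] <;> tauto
  -- the face enters `v` along `d.fst` and leaves it along `d.snd`
  have hturn : facePerm G σ (suppressDart hu hw d) =
      ⟨(v, d.snd), adj_of_mk_eq hu hw (Sym2.eq_swap.trans hmk)⟩ := by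
    rw [suppressDart_eq_of_not_adj hu hw h]
    exact hσ.apply_eq_of_neighbors _ _ (fun hd => d.fst_ne_snd (Subtype.ext hd)) hnbr'
  rw [hturn]
  change suppressDart hu hw (τ d.symm) = σ ⟨(d.snd, v), _⟩
  rw [← hστ, suppressDart_eq_of_not_adj hu hw (fun h' => h h'.symm)]
  rfl

end Faces

section Embedding

variable (huw : u ≠ w) (hnadj : ¬ G.Adj u w) (hnbr : ∀ x, G.Adj v x → x = u ∨ x = w)
include huw hnadj hnbr

theorem mem_range_suppressDart_iff (x : G.Dart) :
    x ∈ range (suppressDart hu hw) ↔ x.fst ≠ v := by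
  refine ⟨fun ⟨d, hd⟩ => hd ▸ d.fst.2, fun hx => ?_⟩
  obtain ⟨⟨a, b⟩, hab⟩ := x
  by_cases hb : b = v
  · subst b
    have hnew : (suppress G v u w).Adj u w := suppress_adj.2 (Or.inr ⟨rfl, huw⟩)
    rcases hnbr a hab.symm with rfl | rfl
    · exact ⟨⟨(u, w), hnew⟩, Dart.ext _ _ (Prod.ext rfl (if_neg hnadj))⟩
    · exact ⟨⟨(w, u), hnew.symm⟩, Dart.ext _ _ (Prod.ext rfl (if_neg fun h => hnadj h.symm))⟩
  · exact ⟨⟨(⟨a, hx⟩, ⟨b, hb⟩), suppress_adj.2 (Or.inl hab)⟩,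
      Dart.ext _ _ (Prod.ext rfl (if_pos hab))⟩

theorem natCard_dart_suppress [Fintype V] (hdeg : G.degree v = 2) :
    Nat.card G.Dart = Nat.card (suppress G v u w).Dart + 2 := by
  classical
  have hrange := mem_range_suppressDart_iff hu hw huw hnadj hnbr
  rw [← Set.ncard_add_ncard_compl (range (suppressDart hu hw)),
    Set.ncard_range_of_injective (suppressDart hu hw).injective, ← hdeg,
    ← dart_fst_fiber_card_eq_degree, ← Set.ncard_coe_finset]
  congr
  ext x
  simp [hrange]

theorem numFaces_suppress_eq [Finite V] {σ : Equiv.Perm G.Dart}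
    {τ : Equiv.Perm (suppress G v u w).Dart} (hσ : IsRotationSystem G σ)
    (hστ : ∀ d, σ (suppressDart hu hw d) = suppressDart hu hw (τ d)) :
    numFaces _ τ = numFaces G σ := by
  have hrange := mem_range_suppressDart_iff hu hw huw hnadj hnbr
  have hmem (d) : facePerm G σ (suppressDart hu hw d) ∈ range (suppressDart hu hw) ↔
      G.Adj d.fst d.snd := by
    rw [hrange, hσ.facePerm_fst, suppressDart_snd_ne_iff]
  refine Equiv.Perm.card_quotient_sameCycle_eq_of_skip
    (fun d h => suppressDart_facePerm_of_adj hστ ((hmem d).1 h))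
    (fun d h => suppressDart_facePerm_of_not_adj hστ hσ hnbr (mt (hmem d).2 h))
    (suppressDart hu hw).injective fun x hx => ?_
  rw [hrange, not_not] at hx
  rw [hrange, hσ.facePerm_fst]
  exact fun h => x.fst_ne_snd (hx.trans h.symm)

theorem embGenus_suppress_eq [Fintype V] [DecidableEq V] (hdeg : G.degree v = 2)
    {σ : Equiv.Perm G.Dart} {τ : Equiv.Perm (suppress G v u w).Dart}
    (hσ : IsRotationSystem G σ)
    (hστ : ∀ d, σ (suppressDart hu hw d) = suppressDart hu hw (τ d)) :
    embGenus _ τ = embGenus G σ := by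
  have hdart := natCard_dart_suppress hu hw huw hnadj hnbr hdeg
  rw [natCard_dart, natCard_dart] at hdart
  have hedge : Nat.card G.edgeSet = Nat.card (suppress G v u w).edgeSet + 1 := by omega
  have hvert : Nat.card V = Nat.card {x // x ≠ v} + 1 := by
    have := Fintype.card_pos_iff.2 ⟨v⟩
    simp only [Nat.card_eq_fintype_card, Fintype.card_subtype_compl, Fintype.card_unique]
    omega
  simp only [embGenus, numFaces_suppress_eq hu hw huw hnadj hnbr hσ hστ, hedge, hvert]
  push_cast
  ring

theorem exists_isRotationSystem_suppress {σ : Equiv.Perm G.Dart} (hσ : IsRotationSystem G σ) :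
    ∃ τ : Equiv.Perm (suppress G v u w).Dart, IsRotationSystem _ τ ∧
      ∀ d, σ (suppressDart hu hw d) = suppressDart hu hw (τ d) := by
  have hrange := mem_range_suppressDart_iff hu hw huw hnadj hnbr
  obtain ⟨τ, hστ⟩ := Equiv.Perm.exists_apply_embedding_eq (suppressDart hu hw) σ
    fun x => by rw [hrange, hrange, hσ.1]
  exact ⟨τ, hσ.of_semiconj (suppressDart hu hw).injective Subtype.val_injective
    (fun _ => rfl) hστ, hστ⟩

theorem exists_isRotationSystem_of_suppress {τ : Equiv.Perm (suppress G v u w).Dart}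
    (hτ : IsRotationSystem _ τ) :
    ∃ σ : Equiv.Perm G.Dart, IsRotationSystem G σ ∧
      ∀ d, σ (suppressDart hu hw d) = suppressDart hu hw (τ d) := by
  classical
  have hrange := mem_range_suppressDart_iff hu hw huw hnadj hnbr
  obtain ⟨σ, hστ, hσa, hσb⟩ := Equiv.Perm.exists_extend_swap (suppressDart hu hw) τ
    (a := ⟨(v, u), hu⟩) (b := ⟨(v, w), hw⟩) (by simp [hrange]) (by simp [hrange])
  refine ⟨σ, ⟨fun x => ?_, fun x y hxy => ?_⟩, hστ⟩
  · by_cases hx : x.fst = v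
    · rcases dart_eq_or_eq_of_fst_eq hu hw hnbr hx with rfl | rfl
      exacts [congrArg (·.fst) hσa, congrArg (·.fst) hσb]
    · obtain ⟨d, rfl⟩ := (hrange x).2 hx
      rw [hστ]
      exact congrArg Subtype.val (hτ.1 d)
  · by_cases hx : x.fst = v
    · rcases dart_eq_or_eq_of_fst_eq hu hw hnbr hx with rfl | rfl <;>
        rcases dart_eq_or_eq_of_fst_eq hu hw hnbr (hxy ▸ hx) with rfl | rfl
      exacts [⟨0, rfl⟩, ⟨1, hσa⟩, ⟨1, hσb⟩, ⟨0, rfl⟩]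
    · obtain ⟨d, rfl⟩ := (hrange x).2 hx
      obtain ⟨d', rfl⟩ := (hrange y).2 (hxy ▸ hx)
      obtain ⟨n, hn⟩ := hτ.2 d d' (Subtype.ext hxy)
      exact ⟨n, by rw [Equiv.Perm.pow_apply_eq_of_semiconj hστ, hn]⟩

theorem genusSet_suppress [Fintype V] [DecidableEq V] (hdeg : G.degree v = 2) :
    genusSet (suppress G v u w) = genusSet G := by
  ext g
  constructor
  · rintro ⟨τ, hτ, rfl⟩
    obtain ⟨σ, hσ, hστ⟩ := exists_isRotationSystem_of_suppress hu hw huw hnadj hnbr hτ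
    exact ⟨σ, hσ, (embGenus_suppress_eq hu hw huw hnadj hnbr hdeg hσ hστ).symm⟩
  · rintro ⟨σ, hσ, rfl⟩
    obtain ⟨τ, hτ, hστ⟩ := exists_isRotationSystem_suppress hu hw huw hnadj hnbr hσ
    exact ⟨τ, hτ, embGenus_suppress_eq hu hw huw hnadj hnbr hdeg hσ hστ⟩

end Embedding

end Suppress

end Genus

open SimpleGraph in
theorem suppress_degree_two_vertex_same_genus_general
    {V : Type*} [Fintype V] [DecidableEq V] (G : SimpleGraph V) [DecidableRel G.Adj]
    (hconn : G.Connected)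
    (v u w : V) (hdeg : G.degree v = 2)
    (hvu : G.Adj v u) (hvw : G.Adj v w) (huw : u ≠ w) (hnadj : ¬ G.Adj u w) :
    ((G.comap (Subtype.val : {x : V // x ≠ v} → V)) ⊔
        SimpleGraph.fromEdgeSet {s((⟨u, hvu.ne'⟩ : {x : V // x ≠ v}), ⟨w, hvw.ne'⟩)}).Connected ∧
      ∃ g : ℚ, IsLeast (Genus.genusSet G) g ∧
        IsLeast (Genus.genusSet
          ((G.comap (Subtype.val : {x : V // x ≠ v} → V)) ⊔
            SimpleGraph.fromEdgeSet
              {s((⟨u, hvu.ne'⟩ : {x : V // x ≠ v}), ⟨w, hvw.ne'⟩)})) g := by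
  have hnbr (x : V) : G.Adj v x → x = u ∨ x = w := G.eq_or_eq_of_degree_eq_two hdeg hvu hvw huw
  have huw' : (⟨u, hvu.ne'⟩ : {x : V // x ≠ v}) ≠ ⟨w, hvw.ne'⟩ := fun h => huw congr($h.1)
  obtain ⟨g, hg⟩ := Genus.exists_isLeast_genusSet G
  refine ⟨Genus.connected_suppress huw' hnbr hconn, g, hg, ?_⟩
  exact Genus.genusSet_suppress hvu hvw huw' hnadj hnbr hdeg ▸ hg

open SimpleGraph in
/-- If `G` is a finite connected simple graph with at least four vertices and
`v` is a vertex of degree 2 whose two distinct neighbours `u` and `w` are not adjacent,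
then the graph `G'` obtained from `G` by deleting `v` and adding the edge `{u, w}`
is a connected simple graph with the same genus as `G`. -/
theorem suppress_degree_two_vertex_same_genus
    {V : Type*} [Fintype V] [DecidableEq V] (G : SimpleGraph V) [DecidableRel G.Adj]
    (hconn : G.Connected) (hcard : 4 ≤ Fintype.card V)
    (v u w : V) (hdeg : G.degree v = 2)
    (hvu : G.Adj v u) (hvw : G.Adj v w) (huw : u ≠ w) (hnadj : ¬ G.Adj u w) :
    ((G.comap (Subtype.val : {x : V // x ≠ v} → V)) ⊔
        SimpleGraph.fromEdgeSet {s((⟨u, hvu.ne'⟩ : {x : V // x ≠ v}), ⟨w, hvw.ne'⟩)}).Connected ∧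
      ∃ g : ℚ, IsLeast (Genus.genusSet G) g ∧
        IsLeast (Genus.genusSet
          ((G.comap (Subtype.val : {x : V // x ≠ v} → V)) ⊔
            SimpleGraph.fromEdgeSet
              {s((⟨u, hvu.ne'⟩ : {x : V // x ≠ v}), ⟨w, hvw.ne'⟩)})) g :=
  suppress_degree_two_vertex_same_genus_general G hconn v u w hdeg hvu hvw huw hnadj
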